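/- Suppose the solution set M* is nonempty and the sequence (x^k, λ^k) is generated by P-ALM, i.e., x^{k+1} ∈ X minimizes x ↦ θ(x) − ⟨λ^k, Ax − b⟩ + (r/2)‖A(x − x^k)‖² + (1/2)⟨x − x^k, Q(x − x^k)⟩ over X and λ^{k+1} = λ^k − r(A(2x^{k+1} − x^k) − b). Define s^k = (rAᵀA + Q)(x^k − x^{k−1}) + Aᵀ(λ^k − λ^{k−1}) for k ≥ 1. Then there exists a constant ϱ > 0, depending only on A, Q, r, and the initial point, such that for every integer k ≥ 1 there exists an integer t with 1 ≤ t ≤ k satisfying ‖x^{t−1} − x^t‖² ≤ ϱ/k and ‖s^t‖² ≤ ϱ/k. -/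

import Mathlib

/-!
The optimality condition of the `x`-subproblem together with the `λ`-update say that
`wᵏ⁺¹ = (xᵏ⁺¹, λᵏ⁺¹)` solves the proximal variational inequality
`θ(x) − θ(xᵏ⁺¹) + ⟨w − wᵏ⁺¹, J(wᵏ⁺¹) + H(wᵏ⁺¹ − wᵏ)⟩ ≥ 0` on `M`. Testing it at `w*`, adding the
inequality defining `w*` tested at `wᵏ⁺¹`, and using that the linear part of `J` is skew-symmetric
gives the contraction `‖wᵏ⁺¹ − w*‖²_H + ‖wᵏ⁺¹ − wᵏ‖²_H ≤ ‖wᵏ − w*‖²_H`. Summing, some `t ≤ k` has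
`‖wᵗ − wᵗ⁻¹‖²_H ≤ ‖w⁰ − w*‖²_H / k`. As `H` is positive definite and `sᵗ` is the first block of
`H(wᵗ − wᵗ⁻¹)`, both `‖xᵗ⁻¹ − xᵗ‖²` and `‖sᵗ‖²` are bounded by a fixed multiple of this.
-/

open Matrix Finset

noncomputable section

/-- The bilinear form `(w₁, w₂) ↦ ⟨w₁, H w₂⟩` of the P-ALM matrix
`H = [[rAᵀA + Q, Aᵀ], [A, (1/r)I]]` on `ℝⁿ × ℝᵐ`. -/
def Hbil {n m : ℕ} (A : Matrix (Fin m) (Fin n) ℝ) (Q : Matrix (Fin n) (Fin n) ℝ) (r : ℝ)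
    (w₁ w₂ : (Fin n → ℝ) × (Fin m → ℝ)) : ℝ :=
  w₁.1 ⬝ᵥ ((r • (Aᵀ * A) + Q) *ᵥ w₂.1) + w₁.1 ⬝ᵥ (Aᵀ *ᵥ w₂.2) + w₁.2 ⬝ᵥ (A *ᵥ w₂.1)
    + 1 / r * (w₁.2 ⬝ᵥ w₂.2)

/-- The squared `H`-weighted norm `‖w‖²_H = ⟨w, Hw⟩`. -/
def HnormSq {n m : ℕ} (A : Matrix (Fin m) (Fin n) ℝ) (Q : Matrix (Fin n) (Fin n) ℝ) (r : ℝ)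
    (w : (Fin n → ℝ) × (Fin m → ℝ)) : ℝ := Hbil A Q r w w

/-- The affine map `J(x, λ) = (−Aᵀλ, Ax − b)`. -/
def Jmap {n m : ℕ} (A : Matrix (Fin m) (Fin n) ℝ) (b : Fin m → ℝ)
    (w : (Fin n → ℝ) × (Fin m → ℝ)) : (Fin n → ℝ) × (Fin m → ℝ) :=
  (-(Aᵀ *ᵥ w.2), A *ᵥ w.1 - b)

/-- The Euclidean inner product on `ℝⁿ × ℝᵐ`. -/
def pdot {n m : ℕ} (w₁ w₂ : (Fin n → ℝ) × (Fin m → ℝ)) : ℝ := w₁.1 ⬝ᵥ w₂.1 + w₁.2 ⬝ᵥ w₂.2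

/-- `w* = (x*, λ*)` belongs to the solution set `M*` of `VI(θ, J, M)`, `M = X × ℝᵐ`:
`w*.1 ∈ X` and `θ(x) − θ(x*) + ⟨w − w*, J(w*)⟩ ≥ 0` for all `w ∈ M`. -/
def SolPoint {n m : ℕ} (θ : (Fin n → ℝ) → ℝ) (X : Set (Fin n → ℝ))
    (A : Matrix (Fin m) (Fin n) ℝ) (b : Fin m → ℝ) (ws : (Fin n → ℝ) × (Fin m → ℝ)) : Prop :=
  ws.1 ∈ X ∧ ∀ w : (Fin n → ℝ) × (Fin m → ℝ), w.1 ∈ X →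
    θ w.1 - θ ws.1 + pdot (w - ws) (Jmap A b ws) ≥ 0

/-- The P-ALM iteration: `x^{k+1} ∈ X` minimizes
`x ↦ θ(x) − ⟨λᵏ, Ax − b⟩ + (r/2)‖A(x − xᵏ)‖² + (1/2)⟨x − xᵏ, Q(x − xᵏ)⟩` over `X`, and
`λ^{k+1} = λᵏ − r(A(2x^{k+1} − xᵏ) − b)`. -/
def PALM {n m : ℕ} (θ : (Fin n → ℝ) → ℝ) (X : Set (Fin n → ℝ))
    (A : Matrix (Fin m) (Fin n) ℝ) (b : Fin m → ℝ) (r : ℝ) (Q : Matrix (Fin n) (Fin n) ℝ)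
    (x : ℕ → Fin n → ℝ) (lam : ℕ → Fin m → ℝ) : Prop :=
  (∀ k : ℕ, x (k + 1) ∈ X ∧ ∀ z ∈ X,
      θ (x (k + 1)) - lam k ⬝ᵥ (A *ᵥ x (k + 1) - b)
          + r / 2 * ((A *ᵥ (x (k + 1) - x k)) ⬝ᵥ (A *ᵥ (x (k + 1) - x k)))
          + 1 / 2 * ((x (k + 1) - x k) ⬝ᵥ (Q *ᵥ (x (k + 1) - x k)))
        ≤ θ z - lam k ⬝ᵥ (A *ᵥ z - b)
          + r / 2 * ((A *ᵥ (z - x k)) ⬝ᵥ (A *ᵥ (z - x k)))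
          + 1 / 2 * ((z - x k) ⬝ᵥ (Q *ᵥ (z - x k)))) ∧
  (∀ k : ℕ, lam (k + 1) = lam k - r • (A *ᵥ ((2 : ℝ) • x (k + 1) - x k) - b))

open Filter Topology

theorem exists_le_mul_of_homogeneous {V : Type*} [NormedAddCommGroup V] [NormedSpace ℝ V]
    [FiniteDimensional ℝ V] {f g : V → ℝ} (hf : Continuous f) (hg : Continuous g)
    (hf2 : ∀ (c : ℝ) v, f (c • v) = c ^ 2 * f v) (hg2 : ∀ (c : ℝ) v, g (c • v) = c ^ 2 * g v)
    (hgpos : ∀ v, v ≠ 0 → 0 < g v) :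
    ∃ C, 0 < C ∧ ∀ v, f v ≤ C * g v := by
  have hsphere : ∀ u ∈ Metric.sphere (0 : V) 1, 0 < g u := fun u hu =>
    hgpos u (ne_zero_of_mem_unit_sphere ⟨u, hu⟩)
  obtain ⟨C, hC⟩ := (isCompact_sphere (0 : V) 1).exists_bound_of_continuousOn
    (hf.continuousOn.div hg.continuousOn fun u hu => (hsphere u hu).ne')
  have hf0 : f 0 = 0 := by simpa using hf2 0 0
  have hg0 : g 0 = 0 := by simpa using hg2 0 0
  have hgnn : ∀ v, 0 ≤ g v := fun v => by
    rcases eq_or_ne v 0 with rfl | hv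
    · exact hg0.ge
    · exact (hgpos v hv).le
  refine ⟨max C 1, by positivity, fun v => ?_⟩
  rcases eq_or_ne v 0 with rfl | hv
  · simp [hf0, hg0]
  set u := ‖v‖⁻¹ • v
  have hu : u ∈ Metric.sphere (0 : V) 1 := by simp [u, norm_smul, hv]
  have hvu : ‖v‖ • u = v := by simp [u, smul_smul, hv]
  have hfu : f u ≤ C * g u := by
    have := (le_abs_self _).trans (hC u hu)
    rwa [Pi.div_apply, div_le_iff₀ (hsphere u hu)] at this
  calc f v = ‖v‖ ^ 2 * f u := by rw [← hf2, hvu]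
    _ ≤ ‖v‖ ^ 2 * (max C 1 * g u) := by
        gcongr; exact hfu.trans (mul_le_mul_of_nonneg_right (le_max_left _ _) (hgnn u))
    _ = max C 1 * g v := by conv_rhs => rw [← hvu, hg2]
                            ring

theorem exists_lt_le_div_of_add_le {d e : ℕ → ℝ} (he : ∀ k, 0 ≤ e k)
    (hde : ∀ k, e (k + 1) + d k ≤ e k) {k : ℕ} (hk : 0 < k) :
    ∃ t < k, d t ≤ e 0 / k := by
  have hsum : ∀ k, ∑ t ∈ Finset.range k, d t + e k ≤ e 0 := fun k => by
    induction k with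
    | zero => simp
    | succ k ih => rw [Finset.sum_range_succ]; linarith [hde k]
  have hsum' : ∑ t ∈ Finset.range k, d t ≤ ∑ _t ∈ Finset.range k, e 0 / k := by
    rw [Finset.sum_const, Finset.card_range, nsmul_eq_mul, mul_div_cancel₀ _ (by positivity)]
    linarith [hsum k, he k]
  obtain ⟨t, ht, hdt⟩ := Finset.exists_le_of_sum_le (Finset.nonempty_range_iff.2 hk.ne') hsum'
  exact ⟨t, Finset.mem_range.1 ht, hdt⟩

theorem nonneg_of_forall_mem_Ioo_nonneg_add_mul {α β : ℝ}
    (h : ∀ τ ∈ Set.Ioo (0 : ℝ) 1, 0 ≤ α + τ * β) : 0 ≤ α := by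
  have hlim : Tendsto (fun τ : ℝ => α + τ * β) (𝓝[>] 0) (𝓝 α) := by
    apply tendsto_nhdsWithin_of_tendsto_nhds
    simpa using ((continuous_id.mul continuous_const).const_add α).tendsto 0
  exact ge_of_tendsto hlim (by filter_upwards [Ioo_mem_nhdsGT one_pos] using h)

theorem Matrix.dotProduct_self_nonneg {ι R : Type*} [Fintype ι] [Ring R] [LinearOrder R]
    [IsStrictOrderedRing R] (v : ι → R) : 0 ≤ v ⬝ᵥ v :=
  Finset.sum_nonneg fun i _ => mul_self_nonneg (v i)

theorem Matrix.IsSymm.smul_transpose_mul_self_add {ι κ : Type*} [Fintype κ] {Q : Matrix ι ι ℝ}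
    (hQ : Q.IsSymm) (A : Matrix κ ι ℝ) (r : ℝ) : (r • (Aᵀ * A) + Q).IsSymm :=
  (IsSymm.smul (transpose_mul Aᵀ A) r).add hQ

section Quadratic

variable {ι : Type*} [Fintype ι]

theorem Matrix.IsSymm.dotProduct_mulVec_comm {P : Matrix ι ι ℝ} (hP : P.IsSymm) (u v : ι → ℝ) :
    u ⬝ᵥ (P *ᵥ v) = v ⬝ᵥ (P *ᵥ u) := by
  conv_lhs => rw [← hP.eq]
  exact dotProduct_transpose_mulVec P u v

theorem Matrix.IsSymm.dotProduct_mulVec_add_smul {P : Matrix ι ι ℝ} (hP : P.IsSymm)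
    (v d : ι → ℝ) (τ : ℝ) :
    (v + τ • d) ⬝ᵥ (P *ᵥ (v + τ • d))
      = v ⬝ᵥ (P *ᵥ v) + 2 * τ * (d ⬝ᵥ (P *ᵥ v)) + τ ^ 2 * (d ⬝ᵥ (P *ᵥ d)) := by
  simp only [mulVec_add, mulVec_smul, dotProduct_add, add_dotProduct, dotProduct_smul,
    smul_dotProduct, smul_eq_mul, hP.dotProduct_mulVec_comm v d]
  ring

theorem IsMinOn.variational_inequality_of_convexOn_add_quadratic {θ : (ι → ℝ) → ℝ}
    {X : Set (ι → ℝ)} {P : Matrix ι ι ℝ} {c a u : ι → ℝ} (hθ : ConvexOn ℝ X θ)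
    (hP : P.IsSymm) (hu : u ∈ X)
    (hmin : IsMinOn (fun z => θ z + c ⬝ᵥ z + 1 / 2 * ((z - a) ⬝ᵥ (P *ᵥ (z - a)))) X u)
    {z : ι → ℝ} (hz : z ∈ X) :
    0 ≤ θ z - θ u + (z - u) ⬝ᵥ (P *ᵥ (u - a) + c) := by
  set d := z - u
  refine nonneg_of_forall_mem_Ioo_nonneg_add_mul (β := 1 / 2 * (d ⬝ᵥ (P *ᵥ d))) ?_
  rintro τ ⟨hτ0, hτ1⟩
  have hseg : (1 - τ) • u + τ • z = u + τ • d := by module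
  have h1τ : 0 ≤ 1 - τ := sub_nonneg.2 hτ1.le
  have hθseg := hθ.2 hu hz h1τ hτ0.le (sub_add_cancel 1 τ)
  rw [hseg, smul_eq_mul, smul_eq_mul] at hθseg
  have hτu := isMinOn_iff.1 hmin _ (hseg ▸ hθ.1 hu hz h1τ hτ0.le (sub_add_cancel 1 τ))
  simp only [show u + τ • d - a = (u - a) + τ • d by abel,
    hP.dotProduct_mulVec_add_smul, dotProduct_add, dotProduct_smul, smul_eq_mul] at hτu
  have : 0 ≤ τ * ((θ z - θ u + d ⬝ᵥ (P *ᵥ (u - a) + c)) + τ * (1 / 2 * (d ⬝ᵥ (P *ᵥ d)))) := by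
    rw [dotProduct_add, dotProduct_comm d c]
    linarith
  exact (mul_nonneg_iff_of_pos_left hτ0).1 this

end Quadratic

section HNorm

variable {n m : ℕ} {A : Matrix (Fin m) (Fin n) ℝ} {Q : Matrix (Fin n) (Fin n) ℝ} {r : ℝ}

def Hmap (A : Matrix (Fin m) (Fin n) ℝ) (Q : Matrix (Fin n) (Fin n) ℝ) (r : ℝ)
    (w : (Fin n → ℝ) × (Fin m → ℝ)) : (Fin n → ℝ) × (Fin m → ℝ) :=
  ((r • (Aᵀ * A) + Q) *ᵥ w.1 + Aᵀ *ᵥ w.2, A *ᵥ w.1 + (1 / r) • w.2)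

theorem Hbil_eq_pdot_Hmap (w₁ w₂ : (Fin n → ℝ) × (Fin m → ℝ)) :
    Hbil A Q r w₁ w₂ = pdot w₁ (Hmap A Q r w₂) := by
  simp only [Hbil, pdot, Hmap, dotProduct_add, dotProduct_smul, smul_eq_mul]
  ring

theorem Hbil_neg_left (w₁ w₂ : (Fin n → ℝ) × (Fin m → ℝ)) :
    Hbil A Q r (-w₁) w₂ = -Hbil A Q r w₁ w₂ := by
  simp only [Hbil, Prod.fst_neg, Prod.snd_neg, neg_dotProduct]
  ring

theorem Hbil_comm (hQ : Q.IsSymm) (w₁ w₂ : (Fin n → ℝ) × (Fin m → ℝ)) :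
    Hbil A Q r w₁ w₂ = Hbil A Q r w₂ w₁ := by
  simp only [Hbil]
  rw [(hQ.smul_transpose_mul_self_add A r).dotProduct_mulVec_comm w₁.1,
    dotProduct_transpose_mulVec, dotProduct_transpose_mulVec, dotProduct_comm w₁.2,
    dotProduct_comm w₂.2 (A *ᵥ w₁.1), dotProduct_comm w₂.2 w₁.2]
  ring

theorem HnormSq_sub (hQ : Q.IsSymm) (w₁ w₂ : (Fin n → ℝ) × (Fin m → ℝ)) :
    HnormSq A Q r (w₁ - w₂)
      = HnormSq A Q r w₁ - 2 * Hbil A Q r w₁ w₂ + HnormSq A Q r w₂ := by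
  have h := Hbil_comm (A := A) (r := r) hQ w₂ w₁
  simp only [HnormSq, Hbil, Prod.fst_sub, Prod.snd_sub, mulVec_sub, dotProduct_sub,
    sub_dotProduct] at h ⊢
  linarith

theorem HnormSq_smul (c : ℝ) (w : (Fin n → ℝ) × (Fin m → ℝ)) :
    HnormSq A Q r (c • w) = c ^ 2 * HnormSq A Q r w := by
  simp only [HnormSq, Hbil, Prod.smul_fst, Prod.smul_snd, mulVec_smul, dotProduct_smul,
    smul_dotProduct, smul_eq_mul]
  ring

theorem HnormSq_eq (hr : r ≠ 0) (w : (Fin n → ℝ) × (Fin m → ℝ)) :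
    HnormSq A Q r w
      = w.1 ⬝ᵥ (Q *ᵥ w.1) + 1 / r * ((r • (A *ᵥ w.1) + w.2) ⬝ᵥ (r • (A *ᵥ w.1) + w.2)) := by
  simp only [HnormSq, Hbil, add_mulVec, smul_mulVec, ← mulVec_mulVec, dotProduct_add,
    add_dotProduct, dotProduct_smul, smul_dotProduct, smul_eq_mul, dotProduct_transpose_mulVec,
    dotProduct_comm w.2]
  field_simp
  ring

theorem HnormSq_pos (hr : 0 < r) (hQ : Q.PosDef) {w : (Fin n → ℝ) × (Fin m → ℝ)} (hw : w ≠ 0) :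
    0 < HnormSq A Q r w := by
  rw [HnormSq_eq hr.ne']
  have hv : 0 ≤ (r • (A *ᵥ w.1) + w.2) ⬝ᵥ (r • (A *ᵥ w.1) + w.2) :=
    dotProduct_self_nonneg (r • (A *ᵥ w.1) + w.2)
  rcases eq_or_ne w.1 0 with h1 | h1
  · have h2 : w.2 ≠ 0 := fun h2 => hw (Prod.ext h1 h2)
    simpa [h1] using mul_pos (one_div_pos.2 hr) (by simpa using dotProduct_star_self_pos_iff.2 h2)
  · have := hQ.dotProduct_mulVec_pos h1
    simp only [star_trivial] at this
    positivity

theorem HnormSq_nonneg (hr : 0 < r) (hQ : Q.PosSemidef) (w : (Fin n → ℝ) × (Fin m → ℝ)) :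
    0 ≤ HnormSq A Q r w := by
  rw [HnormSq_eq hr.ne']
  have hv : 0 ≤ (r • (A *ᵥ w.1) + w.2) ⬝ᵥ (r • (A *ᵥ w.1) + w.2) :=
    dotProduct_self_nonneg (r • (A *ᵥ w.1) + w.2)
  have := hQ.dotProduct_mulVec_nonneg w.1
  simp only [star_trivial] at this
  positivity

theorem Hmap_smul (c : ℝ) (w : (Fin n → ℝ) × (Fin m → ℝ)) :
    Hmap A Q r (c • w) = c • Hmap A Q r w := by
  simp only [Hmap, Prod.smul_fst, Prod.smul_snd, Prod.smul_mk, mulVec_smul, smul_add,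
    smul_comm c (1 / r)]

theorem pdot_add_right (w v v' : (Fin n → ℝ) × (Fin m → ℝ)) :
    pdot w (v + v') = pdot w v + pdot w v' := by
  simp only [pdot, Prod.fst_add, Prod.snd_add, dotProduct_add]
  ring

theorem pdot_neg_left (w v : (Fin n → ℝ) × (Fin m → ℝ)) : pdot (-w) v = -pdot w v := by
  simp only [pdot, Prod.fst_neg, Prod.snd_neg, neg_dotProduct]
  ring

theorem pdot_sub_Jmap_eq (b : Fin m → ℝ) (w w' : (Fin n → ℝ) × (Fin m → ℝ)) :
    pdot (w - w') (Jmap A b w) = pdot (w - w') (Jmap A b w') := by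
  have h := dotProduct_transpose_mulVec A (w.1 - w'.1) (w.2 - w'.2)
  simp only [pdot, Jmap, Prod.fst_sub, Prod.snd_sub, mulVec_sub, dotProduct_sub,
    dotProduct_neg] at h ⊢
  linarith

theorem Jmap_add_Hmap_sub (hr : r ≠ 0) (b : Fin m → ℝ) {y y' : Fin n → ℝ} {l l' : Fin m → ℝ}
    (hl' : l' = l - r • (A *ᵥ ((2 : ℝ) • y' - y) - b)) :
    Jmap A b (y', l') + Hmap A Q r ((y', l') - (y, l))
      = ((r • (Aᵀ * A) + Q) *ᵥ (y' - y) - Aᵀ *ᵥ l, 0) := by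
  subst hl'
  ext1
  · simp only [Jmap, Hmap, Prod.fst_add, Prod.fst_sub, Prod.snd_sub, mulVec_sub]
    abel
  · have hstep : (1 / r) • (l - r • (A *ᵥ ((2 : ℝ) • y' - y) - b) - l)
        = -(A *ᵥ ((2 : ℝ) • y' - y) - b) := by
      rw [sub_sub_cancel_left, smul_neg, smul_smul, one_div, inv_mul_cancel₀ hr, one_smul]
    simp only [Jmap, Hmap, Prod.snd_add, Prod.fst_sub, Prod.snd_sub]
    rw [hstep, mulVec_sub, mulVec_sub, mulVec_smul]
    module

theorem exists_le_mul_HnormSq (hr : 0 < r) (hQ : Q.PosDef) :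
    ∃ C, 0 < C ∧ ∀ w : (Fin n → ℝ) × (Fin m → ℝ),
      w.1 ⬝ᵥ w.1 + (Hmap A Q r w).1 ⬝ᵥ (Hmap A Q r w).1 ≤ C * HnormSq A Q r w := by
  refine exists_le_mul_of_homogeneous (by unfold Hmap; fun_prop)
    (by unfold HnormSq Hbil; fun_prop) ?_
    HnormSq_smul (fun w hw => HnormSq_pos hr hQ hw)
  intro c w
  simp only [Hmap_smul, Prod.smul_fst, dotProduct_smul, smul_dotProduct, smul_eq_mul]
  ring

end HNorm

namespace PALM

variable {n m : ℕ} {θ : (Fin n → ℝ) → ℝ} {X : Set (Fin n → ℝ)} {A : Matrix (Fin m) (Fin n) ℝ}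
  {b : Fin m → ℝ} {r : ℝ} {Q : Matrix (Fin n) (Fin n) ℝ} {x : ℕ → Fin n → ℝ}
  {lam : ℕ → Fin m → ℝ}

theorem isMinOn (h : PALM θ X A b r Q x lam) (k : ℕ) :
    IsMinOn (fun z => θ z + (-(Aᵀ *ᵥ lam k)) ⬝ᵥ z
      + 1 / 2 * ((z - x k) ⬝ᵥ ((r • (Aᵀ * A) + Q) *ᵥ (z - x k)))) X (x (k + 1)) := by
  have hobj : ∀ z, θ z - lam k ⬝ᵥ (A *ᵥ z - b)
        + r / 2 * ((A *ᵥ (z - x k)) ⬝ᵥ (A *ᵥ (z - x k)))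
        + 1 / 2 * ((z - x k) ⬝ᵥ (Q *ᵥ (z - x k)))
      = θ z + (-(Aᵀ *ᵥ lam k)) ⬝ᵥ z
        + 1 / 2 * ((z - x k) ⬝ᵥ ((r • (Aᵀ * A) + Q) *ᵥ (z - x k))) + lam k ⬝ᵥ b := by
    intro z
    simp only [add_mulVec, smul_mulVec, ← mulVec_mulVec, dotProduct_add, dotProduct_smul,
      smul_eq_mul, neg_dotProduct, dotProduct_sub, dotProduct_transpose_mulVec,
      dotProduct_comm (Aᵀ *ᵥ lam k)]
    ring
  refine isMinOn_iff.2 fun z hz => ?_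
  have := (h.1 k).2 z hz
  rw [hobj, hobj] at this
  linarith

theorem variational_inequality (hθ : ConvexOn ℝ X θ) (hr : r ≠ 0) (hQ : Q.IsSymm)
    (h : PALM θ X A b r Q x lam) (k : ℕ) {w : (Fin n → ℝ) × (Fin m → ℝ)} (hw : w.1 ∈ X) :
    0 ≤ θ w.1 - θ (x (k + 1))
      + pdot (w - (x (k + 1), lam (k + 1))) (Jmap A b (x (k + 1), lam (k + 1)))
      + Hbil A Q r (w - (x (k + 1), lam (k + 1))) ((x (k + 1), lam (k + 1)) - (x k, lam k)) := by
  have hvi := (h.isMinOn k).variational_inequality_of_convexOn_add_quadratic hθ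
    (hQ.smul_transpose_mul_self_add A r) (h.1 k).1 hw
  rw [Hbil_eq_pdot_Hmap, add_assoc, ← pdot_add_right, Jmap_add_Hmap_sub hr b (h.2 k)]
  simpa [pdot, sub_eq_add_neg] using hvi

theorem HnormSq_sub_add_HnormSq_le (hθ : ConvexOn ℝ X θ) (hr : r ≠ 0) (hQ : Q.IsSymm)
    (h : PALM θ X A b r Q x lam) {ws : (Fin n → ℝ) × (Fin m → ℝ)} (hws : SolPoint θ X A b ws)
    (k : ℕ) :
    HnormSq A Q r ((x (k + 1), lam (k + 1)) - ws)
        + HnormSq A Q r ((x (k + 1), lam (k + 1)) - (x k, lam k))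
      ≤ HnormSq A Q r ((x k, lam k) - ws) := by
  have hstep := h.variational_inequality hθ hr hQ k hws.1
  have hsol := hws.2 (x (k + 1), lam (k + 1)) (h.1 k).1
  set w' : (Fin n → ℝ) × (Fin m → ℝ) := (x (k + 1), lam (k + 1))
  set w : (Fin n → ℝ) × (Fin m → ℝ) := (x k, lam k)
  rw [← neg_sub w' ws, pdot_neg_left, Hbil_neg_left, pdot_sub_Jmap_eq] at hstep
  have hexp := HnormSq_sub (A := A) (r := r) hQ (w' - ws) (w' - w)
  rw [sub_sub_sub_cancel_left] at hexp
  linarith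

end PALM

theorem stmt_10_general (n m : ℕ) (θ : (Fin n → ℝ) → ℝ) (hθ : ConvexOn ℝ Set.univ θ)
    (X : Set (Fin n → ℝ)) (hXconvex : Convex ℝ X)
    (A : Matrix (Fin m) (Fin n) ℝ) (b : Fin m → ℝ) (r : ℝ) (hr : 0 < r)
    (Q : Matrix (Fin n) (Fin n) ℝ) (hQ : Q.PosDef)
    (hsol : ∃ ws : (Fin n → ℝ) × (Fin m → ℝ), SolPoint θ X A b ws)
    (x : ℕ → Fin n → ℝ) (lam : ℕ → Fin m → ℝ) (halg : PALM θ X A b r Q x lam)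
    (s : ℕ → Fin n → ℝ)
    (hs : ∀ k : ℕ, 1 ≤ k →
      s k = (r • (Aᵀ * A) + Q) *ᵥ (x k - x (k - 1)) + Aᵀ *ᵥ (lam k - lam (k - 1))) :
    ∃ ϱ : ℝ, 0 < ϱ ∧ ∀ k : ℕ, 1 ≤ k → ∃ t : ℕ, 1 ≤ t ∧ t ≤ k ∧
      (x (t - 1) - x t) ⬝ᵥ (x (t - 1) - x t) ≤ ϱ / (k : ℝ) ∧
      s t ⬝ᵥ s t ≤ ϱ / (k : ℝ) := by
  obtain ⟨ws, hws⟩ := hsol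
  have hQs : Q.IsSymm := isHermitian_iff_isSymm.1 hQ.1
  have hfejer := halg.HnormSq_sub_add_HnormSq_le (hθ.subset (Set.subset_univ X) hXconvex)
    hr.ne' hQs hws
  obtain ⟨C, hC, hdom⟩ := exists_le_mul_HnormSq (A := A) hr hQ
  set C₀ := HnormSq A Q r ((x 0, lam 0) - ws)
  have hC₀ : 0 ≤ C₀ := HnormSq_nonneg hr hQ.posSemidef _
  refine ⟨C * C₀ + 1, by positivity, fun k hk => ?_⟩
  obtain ⟨t, htk, ht⟩ := exists_lt_le_div_of_add_le
    (d := fun t => HnormSq A Q r ((x (t + 1), lam (t + 1)) - (x t, lam t)))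
    (e := fun t => HnormSq A Q r ((x t, lam t) - ws))
    (fun _ => HnormSq_nonneg hr hQ.posSemidef _) hfejer hk
  have hbound := (hdom _).trans (mul_le_mul_of_nonneg_left ht hC.le)
  have hϱ : C * (C₀ / k) ≤ (C * C₀ + 1) / k := by
    rw [← mul_div_assoc]; gcongr; linarith
  have hst : s (t + 1) = (Hmap A Q r ((x (t + 1), lam (t + 1)) - (x t, lam t))).1 := by
    rw [hs (t + 1) (by omega), Nat.add_sub_cancel]; rfl
  have hsum : (x (t + 1) - x t) ⬝ᵥ (x (t + 1) - x t) + s (t + 1) ⬝ᵥ s (t + 1) ≤ C * (C₀ / k) := by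
    rw [hst]; exact hbound
  have hx : 0 ≤ (x (t + 1) - x t) ⬝ᵥ (x (t + 1) - x t) :=
    dotProduct_self_nonneg (x (t + 1) - x t)
  have hs' : 0 ≤ s (t + 1) ⬝ᵥ s (t + 1) :=
    dotProduct_self_nonneg (s (t + 1))
  refine ⟨t + 1, by omega, by omega, ?_, by linarith⟩
  rw [Nat.add_sub_cancel, ← neg_sub, neg_dotProduct_neg]
  linarith

/-- Theorem 2.4, pointwise `O(1/k)` rate. -/
theorem stmt_10 (n m : ℕ) (θ : (Fin n → ℝ) → ℝ) (hθ : ConvexOn ℝ Set.univ θ)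
    (X : Set (Fin n → ℝ)) (hXne : X.Nonempty) (hXclosed : IsClosed X) (hXconvex : Convex ℝ X)
    (A : Matrix (Fin m) (Fin n) ℝ) (b : Fin m → ℝ) (r : ℝ) (hr : 0 < r)
    (Q : Matrix (Fin n) (Fin n) ℝ) (hQ : Q.PosDef)
    (hsol : ∃ ws : (Fin n → ℝ) × (Fin m → ℝ), SolPoint θ X A b ws)
    (x : ℕ → Fin n → ℝ) (lam : ℕ → Fin m → ℝ) (halg : PALM θ X A b r Q x lam)
    (s : ℕ → Fin n → ℝ)
    (hs : ∀ k : ℕ, 1 ≤ k →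
      s k = (r • (Aᵀ * A) + Q) *ᵥ (x k - x (k - 1)) + Aᵀ *ᵥ (lam k - lam (k - 1))) :
    ∃ ϱ : ℝ, 0 < ϱ ∧ ∀ k : ℕ, 1 ≤ k → ∃ t : ℕ, 1 ≤ t ∧ t ≤ k ∧
      (x (t - 1) - x t) ⬝ᵥ (x (t - 1) - x t) ≤ ϱ / (k : ℝ) ∧
      s t ⬝ᵥ s t ≤ ϱ / (k : ℝ) :=
  stmt_10_general n m θ hθ X hXconvex A b r hr Q hQ hsol x lam halg s hs
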